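/- Define L_n(x) := (α_n/n) · |∑_{k=0}^n k e^{ikx}|² with α_n := 6/((n+1)(2n+1)). There is a constant C > 0 such that for all 0 < ε ≤ 1, all n with nε > 1, and all x with |sin(x/2)| ≥ ε, one has | L_n(x) − α_n n / (4 sin²(x/2)) | ≤ C/(n² ε³). -/

import Mathlib

open Real Complex Finset

noncomputable def Ln (n : ℕ) (x : ℝ) : ℝ :=
  (6 / ((n + 1) * (2 * n + 1)) / n) *
    ‖∑ k ∈ Finset.range (n + 1), (k : ℂ) * Complex.exp (k * x * Complex.I)‖ ^ 2

/-!
With `z = e^{ix}` and `a = |z - 1| = 2|sin(x/2)|`, summing the arithmetico-geometric series gives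
`(z - 1)² ∑ k zᵏ = z ((1 - zⁿ) + n zⁿ (z - 1))`. Since `|z| = 1`, this says that
`b = a² |∑ k zᵏ|` differs from `n a` by at most `|1 - zⁿ| ≤ 2`. Hence
`L_n(x) - α_n n / a² = (α_n / n) (b² - n² a²) / a⁴` with `|b² - n² a²| ≤ 4 n a + 4`, and
`α_n / n ≤ 3 / n³`, `a ≥ 2ε`, `nε > 1` give the bound `3 / (n² ε³)`.
-/

theorem sq_sub_one_mul_sum_range_succ_natCast_mul_pow {R : Type*} [CommRing R] (z : R) (n : ℕ) :
    (z - 1) ^ 2 * ∑ k ∈ range (n + 1), (k : R) * z ^ k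
      = z * ((1 - z ^ n) + n * z ^ n * (z - 1)) := by
  induction n with
  | zero => simp
  | succ m ih =>
    rw [sum_range_succ, mul_add, ih]
    push_cast
    ring

theorem abs_norm_sub_one_sq_mul_norm_sum_sub_le {z : ℂ} (hz : ‖z‖ = 1) (n : ℕ) :
    |‖z - 1‖ ^ 2 * ‖∑ k ∈ range (n + 1), (k : ℂ) * z ^ k‖ - n * ‖z - 1‖| ≤ 2 := by
  have hmain : ‖z - 1‖ ^ 2 * ‖∑ k ∈ range (n + 1), (k : ℂ) * z ^ k‖
      = ‖(1 - z ^ n) + n * z ^ n * (z - 1)‖ := by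
    rw [← norm_pow, ← norm_mul, sq_sub_one_mul_sum_range_succ_natCast_mul_pow, norm_mul, hz,
      one_mul]
  have hlin : (n : ℝ) * ‖z - 1‖ = ‖(n : ℂ) * z ^ n * (z - 1)‖ := by
    simp [hz]
  rw [hmain, hlin]
  calc _ ≤ ‖(1 - z ^ n) + n * z ^ n * (z - 1) - n * z ^ n * (z - 1)‖ := abs_norm_sub_norm_le _ _
    _ ≤ ‖(1 : ℂ)‖ + ‖z ^ n‖ := by rw [add_sub_cancel_right]; exact norm_sub_le _ _
    _ = 2 := by rw [norm_pow, hz]; norm_num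

theorem abs_sq_sub_sq_le_of_abs_sub_le {b m : ℝ} (hm : 0 ≤ m) (h : |b - m| ≤ 2) :
    |b ^ 2 - m ^ 2| ≤ 4 * m + 4 := by
  have hsum : |b + m| ≤ 2 * m + 2 := by
    calc |b + m| = |(b - m) + 2 * m| := by congr 1; ring
      _ ≤ |b - m| + |2 * m| := abs_add_le _ _
      _ ≤ 2 * m + 2 := by rw [abs_of_nonneg (by linarith : 0 ≤ 2 * m)]; linarith
  calc |b ^ 2 - m ^ 2| = |b - m| * |b + m| := by rw [← abs_mul]; congr 1; ring
    _ ≤ 2 * (2 * m + 2) := mul_le_mul h hsum (abs_nonneg _) zero_le_two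
    _ = 4 * m + 4 := by ring

theorem six_div_mul_div_le_three_div_cube {N : ℝ} (hN : 0 < N) :
    6 / ((N + 1) * (2 * N + 1)) / N ≤ 3 / N ^ 3 := by
  rw [div_div, div_le_div_iff₀ (by positivity) (by positivity)]
  nlinarith [pow_pos hN 3, pow_pos hN 2]

theorem abs_mul_sq_sub_sq_div_pow_four_le {N a b ε : ℝ} (hε : 0 < ε) (hNε : 1 < N * ε)
    (ha : 2 * ε ≤ a) (hb : |b - N * a| ≤ 2) :
    |6 / ((N + 1) * (2 * N + 1)) / N * (b ^ 2 - (N * a) ^ 2) / a ^ 4| ≤ 3 / (N ^ 2 * ε ^ 3) := by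
  have hN : 0 < N := pos_of_mul_pos_left (hNε.trans' one_pos) hε.le
  have ha0 : 0 < a := by linarith
  have hsq := abs_sq_sub_sq_le_of_abs_sub_le (by positivity) hb
  rw [abs_div, abs_mul, abs_of_pos (by positivity : 0 < 6 / ((N + 1) * (2 * N + 1)) / N),
    abs_of_pos (by positivity : 0 < a ^ 4)]
  calc 6 / ((N + 1) * (2 * N + 1)) / N * |b ^ 2 - (N * a) ^ 2| / a ^ 4
      ≤ 3 / N ^ 3 * (4 * (N * a) + 4) / a ^ 4 := by
        gcongr ?_ * ?_ / _
        exact six_div_mul_div_le_three_div_cube hN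
    _ = 12 / (N ^ 2 * ε ^ 3) * (ε / a) ^ 3
          + 12 / (N ^ 2 * ε ^ 3) * (1 / (N * ε)) * (ε / a) ^ 4 := by
        field_simp
        ring
    _ ≤ 12 / (N ^ 2 * ε ^ 3) * (1 / 2) ^ 3 + 12 / (N ^ 2 * ε ^ 3) * 1 * (1 / 2) ^ 4 := by
        have hεa : ε / a ≤ 1 / 2 := by rw [div_le_iff₀ ha0]; linarith
        have hNε' : 1 / (N * ε) ≤ 1 := by rw [div_le_one (by positivity)]; exact hNε.le
        gcongr
    _ ≤ 3 / (N ^ 2 * ε ^ 3) := by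
        rw [← sub_nonneg]
        ring_nf
        positivity

theorem Ln_estimate :
    ∃ C > 0, ∀ ε : ℝ, 0 < ε → ε ≤ 1 → ∀ n : ℕ, 1 < n * ε →
      ∀ x : ℝ, ε ≤ |Real.sin (x / 2)| →
        |Ln n x - (6 / ((n + 1) * (2 * n + 1))) * n / (4 * Real.sin (x / 2) ^ 2)|
          ≤ C / (n ^ 2 * ε ^ 3) := by
  refine ⟨3, by norm_num, fun ε hε _ n hnε x hx => ?_⟩
  set z := Complex.exp (I * x)
  have ha : ‖z - 1‖ = 2 * |Real.sin (x / 2)| := by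
    rw [norm_exp_I_mul_ofReal_sub_one, Real.norm_eq_abs, abs_mul, abs_two]
  have ha0 : 0 < ‖z - 1‖ := by rw [ha]; linarith
  have hsum : ∑ k ∈ range (n + 1), (k : ℂ) * Complex.exp (k * x * I)
      = ∑ k ∈ range (n + 1), (k : ℂ) * z ^ k := by
    refine sum_congr rfl fun k _ => ?_
    rw [← Complex.exp_nat_mul, mul_comm I, mul_assoc]
  have hdiff : Ln n x - 6 / ((n + 1) * (2 * n + 1)) * n / (4 * Real.sin (x / 2) ^ 2)
      = 6 / ((n + 1) * (2 * n + 1)) / n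
        * ((‖z - 1‖ ^ 2 * ‖∑ k ∈ range (n + 1), (k : ℂ) * z ^ k‖) ^ 2 - (n * ‖z - 1‖) ^ 2)
        / ‖z - 1‖ ^ 4 := by
    have hs : 4 * Real.sin (x / 2) ^ 2 = ‖z - 1‖ ^ 2 := by rw [ha, mul_pow, sq_abs]; norm_num
    have hn : (n : ℝ) ≠ 0 := by rintro h; rw [h, zero_mul] at hnε; linarith
    rw [Ln, hsum, hs]
    field_simp
  rw [hdiff]
  exact abs_mul_sq_sub_sq_div_pow_four_le hε hnε (by linarith)
    (abs_norm_sub_one_sq_mul_norm_sum_sub_le (norm_exp_I_mul_ofReal x) n)
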